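/- If X is a topological space such that player Two has a winning strategy in the game G_1(Ω_x, Ω_x) for every point x ∈ X, then X is productively countably tight: for every countably tight space Y, the product X × Y is countably tight. -/

import Mathlib

open Set

/-- The history of the first `n+1` moves of player One (a play `f`). -/
def oneHist {M : Type*} (f : ℕ → M) (n : ℕ) : List M :=
  List.ofFn (fun i : Fin (n + 1) => f i.val)

/-- `Ω_x`: the family of subsets of `X` accumulating at `x`, i.e. having `x` in their
closure but not containing `x`. -/
def OmegaPt {X : Type*} [TopologicalSpace X] (x : X) : Set (Set X) :=
  {A | x ∈ closure A ∧ x ∉ A}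

/-- Player Two has a winning strategy in the game `G₁(Ω_x, Ω_x)`: there is a strategy
picking, after each history of One's moves (elements of `Ω_x`), a point of the last
played set, such that for every run the chosen points are legal and form a set in `Ω_x`. -/
def G1OmegaTwoWins {X : Type*} [TopologicalSpace X] (x : X) : Prop :=
  ∃ σ : List (Set X) → X,
    ∀ f : ℕ → Set X, (∀ n, f n ∈ OmegaPt x) →
      (∀ n, σ (oneHist f n) ∈ f n) ∧
      (Set.range fun n => σ (oneHist f n)) ∈ OmegaPt x

/-- A space is countably tight if every point in the closure of a set is in the closure
of a countable subset of it. -/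
def CountablyTight (X : Type*) [TopologicalSpace X] : Prop :=
  ∀ (A : Set X) (x : X), x ∈ closure A →
    ∃ C ⊆ A, C.Countable ∧ x ∈ closure C

@[simp] lemma oneHist_length {M : Type*} (f : ℕ → M) (n : ℕ) :
    (oneHist f n).length = n + 1 := by simp [oneHist]

lemma oneHist_getElem {M : Type*} (f : ℕ → M) (n i : ℕ) (h : i < (oneHist f n).length) :
    (oneHist f n)[i] = f i := by
  simp only [oneHist, List.getElem_ofFn]

lemma oneHist_succ {M : Type*} (f : ℕ → M) (n : ℕ) :
    oneHist f (n + 1) = oneHist f n ++ [f (n + 1)] := by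
  apply List.ext_getElem
  · simp
  · intro i h1 h2
    rw [oneHist_getElem]
    rcases Nat.lt_or_ge i (n + 1) with h | h
    · rw [List.getElem_append_left (by simpa using h), oneHist_getElem]
    · have : i = n + 1 := by simp at h1; omega
      subst this
      rw [List.getElem_append_right (by simp)]
      simp

lemma oneHist_of_list {M : Type*} (l : List M) (d : M) (n : ℕ) (hl : l.length = n + 1) :
    oneHist (fun k => l.getD k d) n = l := by
  apply List.ext_getElem
  · simp [hl]
  · intro i h1 h2
    rw [oneHist_getElem]
    exact List.getD_eq_getElem l d h2

/-- The key construction: if every "vertical trace" set accumulates at `x`, we can use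
Two's winning strategy to build a countable subset of `A` whose closure contains `(x,y)`. -/
lemma key_construction {X Y : Type*} [TopologicalSpace X] [TopologicalSpace Y]
    (hY : CountablyTight Y) (x : X) (y : Y) (hw : G1OmegaTwoWins x)
    (A : Set (X × Y))
    (hπ : ∀ V ∈ nhds y, {a : X | ∃ b ∈ V, (a, b) ∈ A} ∈ OmegaPt x) :
    ∃ C ⊆ A, C.Countable ∧ (x, y) ∈ closure C := by
  classical
  obtain ⟨σ, hσ⟩ := hw
  set π : Set Y → Set X := fun V => {a : X | ∃ b ∈ V, (a, b) ∈ A} with hπdef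
  -- the strategy answers legally after any finite legal history
  have step : ∀ h : List (Set X), (∀ s ∈ h, s ∈ OmegaPt x) → ∀ last ∈ OmegaPt x,
      σ (h ++ [last]) ∈ last := by
    intro h hh last hlast
    set l := h ++ [last] with hl
    have hlen : l.length = h.length + 1 := by simp [hl]
    set f : ℕ → Set X := fun k => l.getD k (π univ) with hf
    have hfleg : ∀ n, f n ∈ OmegaPt x := by
      intro n
      rcases Nat.lt_or_ge n l.length with hn | hn
      · have : f n = l[n] := List.getD_eq_getElem l _ hn
        rw [this]
        have hmem := List.getElem_mem hn
        rcases List.mem_append.1 hmem with hm | hm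
        · exact hh _ hm
        · rw [List.mem_singleton] at hm; rw [hm]; exact hlast
      · have : f n = π univ := List.getD_eq_default l _ hn
        rw [this]
        exact hπ univ Filter.univ_mem
    have h1 := (hσ f hfleg).1 h.length
    have h2 : oneHist f h.length = l := oneHist_of_list l (π univ) h.length hlen
    have h3 : f h.length = last := by
      have hlt : h.length < l.length := by omega
      have h4 : f h.length = l[h.length] := List.getD_eq_getElem l _ hlt
      rw [h4]
      show (h ++ [last])[h.length]'(by simp) = last
      rw [List.getElem_append_right (by omega)]
      simp
    rw [h2, h3] at h1
    exact h1
  -- `bb h V`: the point of `Y` witnessing that the strategy's answer lies in `π V`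
  set bb : List (Set X) → Set Y → Y := fun h V =>
    if hc : ∃ b, b ∈ V ∧ (σ (h ++ [π V]), b) ∈ A then hc.choose else y with hbb
  have hbbspec : ∀ h, (∀ s ∈ h, s ∈ OmegaPt x) → ∀ V ∈ nhds y,
      bb h V ∈ V ∧ (σ (h ++ [π V]), bb h V) ∈ A := by
    intro h hh V hV
    have h1 : σ (h ++ [π V]) ∈ π V := step h hh (π V) (hπ V hV)
    obtain ⟨b, hb1, hb2⟩ := h1
    have hc : ∃ b, b ∈ V ∧ (σ (h ++ [π V]), b) ∈ A := ⟨b, hb1, hb2⟩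
    simp only [hbb, dif_pos hc]
    exact ⟨hc.choose_spec.1, hc.choose_spec.2⟩
  -- countable tightness of `Y` picks countably many children of each node
  have hD : ∀ h : List (Set X), (∀ s ∈ h, s ∈ OmegaPt x) →
      ∃ e : ℕ → Y, (∀ n, ∃ V ∈ nhds y, bb h V = e n) ∧ y ∈ closure (range e) := by
    intro h hh
    have hcl : y ∈ closure {b | ∃ V ∈ nhds y, bb h V = b} := by
      rw [mem_closure_iff_nhds]
      intro W hW
      exact ⟨bb h W, (hbbspec h hh W hW).1, W, hW, rfl⟩
    obtain ⟨C, hCsub, hCcnt, hCcl⟩ := hY _ y hcl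
    have hCne : C.Nonempty := by
      rcases C.eq_empty_or_nonempty with h0 | h0
      · rw [h0, closure_empty] at hCcl; exact absurd hCcl (notMem_empty y)
      · exact h0
    obtain ⟨e, he⟩ := hCcnt.exists_eq_range hCne
    refine ⟨e, fun n => hCsub ?_, ?_⟩
    · rw [he]; exact mem_range_self n
    · rw [← he]; exact hCcl
  set ee : List (Set X) → ℕ → Y := fun h =>
    if hh : ∀ s ∈ h, s ∈ OmegaPt x then (hD h hh).choose else fun _ => y with hee
  have hee1 : ∀ h (hh : ∀ s ∈ h, s ∈ OmegaPt x) (n : ℕ),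
      ∃ V ∈ nhds y, bb h V = ee h n := by
    intro h hh n
    simp only [hee, dif_pos hh]
    exact (hD h hh).choose_spec.1 n
  have hee2 : ∀ h (hh : ∀ s ∈ h, s ∈ OmegaPt x), y ∈ closure (range (ee h)) := by
    intro h hh
    simp only [hee, dif_pos hh]
    exact (hD h hh).choose_spec.2
  -- the chosen neighborhood witnessing `ee h n`
  set Vw : List (Set X) → ℕ → Set Y := fun h n =>
    if hc : ∃ V ∈ nhds y, bb h V = ee h n then hc.choose else univ with hVw
  have hVw1 : ∀ h (hh : ∀ s ∈ h, s ∈ OmegaPt x) (n : ℕ),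
      Vw h n ∈ nhds y ∧ bb h (Vw h n) = ee h n := by
    intro h hh n
    have hc := hee1 h hh n
    simp only [hVw, dif_pos hc]
    exact ⟨hc.choose_spec.1, hc.choose_spec.2⟩
  -- the tree of histories, indexed by finite sequences of naturals
  set hist : List ℕ → List (Set X) := fun s =>
    s.rec [] (fun n _ ih => ih ++ [π (Vw ih n)]) with hhist
  have hist_cons : ∀ (n : ℕ) (s : List ℕ),
      hist (n :: s) = hist s ++ [π (Vw (hist s) n)] := fun n s => rfl
  have hist_leg : ∀ s : List ℕ, ∀ t ∈ hist s, t ∈ OmegaPt x := by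
    intro s
    induction s with
    | nil => intro t ht; simp [hhist] at ht
    | cons n s ih =>
      intro t ht
      rw [hist_cons, List.mem_append] at ht
      rcases ht with ht | ht
      · exact ih t ht
      · rw [List.mem_singleton] at ht; rw [ht]
        exact hπ _ (hVw1 (hist s) ih n).1
  -- the countable candidate set
  refine ⟨(fun p : List ℕ × ℕ =>
      (σ (hist p.1 ++ [π (Vw (hist p.1) p.2)]), ee (hist p.1) p.2)) '' univ, ?_, ?_, ?_⟩
  · rintro _ ⟨⟨s, n⟩, -, rfl⟩
    have h1 := hVw1 (hist s) (hist_leg s) n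
    have h2 := (hbbspec (hist s) (hist_leg s) (Vw (hist s) n) h1.1).2
    rw [h1.2] at h2
    exact h2
  · exact countable_univ.image _
  · rw [mem_closure_iff_nhds]
    intro T hT
    rw [nhds_prod_eq] at hT
    obtain ⟨U, hU, V, hV, hUV⟩ := Filter.mem_prod_iff.1 hT
    -- build a branch of the tree along which the `Y`-coordinates stay in `V`
    set nxt : List ℕ → ℕ := fun s =>
      if hc : ∃ n, ee (hist s) n ∈ V then hc.choose else 0 with hnxt
    have hnxt1 : ∀ s : List ℕ, ee (hist s) (nxt s) ∈ V := by
      intro s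
      have hcl := hee2 (hist s) (hist_leg s)
      obtain ⟨b, hb1, k, hk⟩ := mem_closure_iff_nhds.1 hcl V hV
      have hc : ∃ n, ee (hist s) n ∈ V := ⟨k, by rw [hk]; exact hb1⟩
      simp only [hnxt, dif_pos hc]
      exact hc.choose_spec
    set g : ℕ → List ℕ := fun k => Nat.rec [] (fun _ ih => nxt ih :: ih) k with hg
    have hgsucc : ∀ k, g (k + 1) = nxt (g k) :: g k := fun k => rfl
    set f : ℕ → Set X := fun k => π (Vw (hist (g k)) (nxt (g k))) with hf2
    have hhistg : ∀ k, hist (g (k + 1)) = hist (g k) ++ [f k] := by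
      intro k; rw [hgsucc, hist_cons]
    have honehist : ∀ k, oneHist f k = hist (g (k + 1)) := by
      intro k
      induction k with
      | zero =>
        rw [hhistg 0]
        have hz : hist (g 0) = [] := rfl
        rw [hz]
        simp [oneHist, List.ofFn_succ]
      | succ k ih => rw [oneHist_succ, ih, hhistg (k + 1)]
    have hfleg : ∀ k, f k ∈ OmegaPt x := fun k =>
      hπ _ (hVw1 (hist (g k)) (hist_leg (g k)) (nxt (g k))).1
    have hwin : x ∈ closure (Set.range fun n => σ (oneHist f n)) := (hσ f hfleg).2.1
    obtain ⟨p, hpU, k, hpk⟩ := mem_closure_iff_nhds.1 hwin U hU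
    refine ⟨(σ (oneHist f k), ee (hist (g k)) (nxt (g k))), hUV ?_, ⟨(g k, nxt (g k)),
      mem_univ _, ?_⟩⟩
    · refine mk_mem_prod ?_ (hnxt1 (g k))
      rw [← hpk] at hpU
      exact hpU
    · simp only
      rw [honehist k, hhistg k]

/-- If player Two has a winning strategy in `G₁(Ω_x, Ω_x)` for every `x ∈ X`, then `X`
is productively countably tight: its product with every countably tight space is
countably tight. -/
theorem g1_omega_two_wins_implies_productively_countably_tight {X : Type*}
    [TopologicalSpace X] (h : ∀ x : X, G1OmegaTwoWins x) :
    ∀ (Y : Type*) [TopologicalSpace Y], CountablyTight Y → CountablyTight (X × Y) := by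
  intro Y _ hY A z hz
  obtain ⟨x, y⟩ := z
  by_cases hzA : (x, y) ∈ A
  · exact ⟨{(x, y)}, singleton_subset_iff.2 hzA, countable_singleton _,
      subset_closure rfl⟩
  by_cases hS : y ∈ closure {b | (x, b) ∈ A}
  · obtain ⟨D, hDsub, hDcnt, hDcl⟩ := hY _ y hS
    refine ⟨(fun b => (x, b)) '' D, ?_, hDcnt.image _, ?_⟩
    · rintro _ ⟨b, hb, rfl⟩
      exact hDsub hb
    · exact map_mem_closure (Continuous.prodMk_right x) hDcl (fun b hb => mem_image_of_mem _ hb)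
  · obtain ⟨V₀, hV₀, hV₀S⟩ : ∃ V₀ ∈ nhds y, ∀ b ∈ V₀, (x, b) ∉ A := by
      rw [mem_closure_iff_nhds] at hS
      push_neg at hS
      obtain ⟨V₀, hV₀, hemp⟩ := hS
      refine ⟨V₀, hV₀, fun b hb hba => ?_⟩
      have : b ∈ V₀ ∩ {b | (x, b) ∈ A} := ⟨hb, hba⟩
      rw [hemp] at this
      exact notMem_empty b this
    set A' : Set (X × Y) := A ∩ (Prod.snd ⁻¹' V₀) with hA'
    have hpre : (Prod.snd ⁻¹' V₀ : Set (X × Y)) ∈ nhds (x, y) :=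
      continuous_snd.continuousAt.preimage_mem_nhds hV₀
    have hzA' : (x, y) ∈ closure A' := by
      rw [mem_closure_iff_nhds] at hz ⊢
      intro T hT
      obtain ⟨p, ⟨hp1, hp2⟩, hp3⟩ := hz (T ∩ Prod.snd ⁻¹' V₀) (Filter.inter_mem hT hpre)
      exact ⟨p, hp1, hp3, hp2⟩
    have hπ' : ∀ V ∈ nhds y, {a : X | ∃ b ∈ V, (a, b) ∈ A'} ∈ OmegaPt x := by
      intro V hV
      constructor
      · rw [mem_closure_iff_nhds]
        intro U hU
        have hUV : U ×ˢ V ∈ nhds (x, y) := by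
          rw [nhds_prod_eq]; exact Filter.prod_mem_prod hU hV
        obtain ⟨⟨a, b⟩, ⟨haU, hbV⟩, hab⟩ := mem_closure_iff_nhds.1 hzA' _ hUV
        exact ⟨a, haU, b, hbV, hab⟩
      · rintro ⟨b, hbV, hab, hbV₀⟩
        exact hV₀S b hbV₀ hab
    obtain ⟨C, hCsub, hCcnt, hCcl⟩ := key_construction hY x y (h x) A' hπ'
    exact ⟨C, fun c hc => (hCsub hc).1, hCcnt, hCcl⟩
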